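/- arXiv:1104.3373 — 3 statements merged into one kernel-verified Lean document; each statement's English description precedes it below -/
import Mathlib

section
/- Let M be a right pseudocompact B-module, V ⊆ M a K-subspace, and e an idempotent of B with Ve ⊆ V. Then the closure of Ve equals (closure of V)·e. -/
open MulOpposite

/-- A pseudocompact algebra: complete Hausdorff topological algebra with a basis of
neighborhoods of zero consisting of open two-sided ideals of finite codimension over `K`. -/
def IsPseudocompactAlgebra (K B : Type*) [Field K] [Ring B] [Algebra K B]
    [UniformSpace B] : Prop :=
  CompleteSpace B ∧ T2Space B ∧
    ∀ U ∈ nhds (0 : B), ∃ I : TwoSidedIdeal B, ∃ W : Submodule K B,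
      (W : Set B) = (I : Set B) ∧ (W : Set B) ⊆ U ∧ IsOpen (W : Set B) ∧
        FiniteDimensional K (B ⧸ W)

/-- A pseudocompact module over `R` (for right `B`-modules take `R = Bᵐᵒᵖ`):
complete Hausdorff linearly topologized module with a basis of neighborhoods of zero
consisting of open submodules of finite codimension over `K`. -/
def IsPseudocompactModule (K R M : Type*) [Field K] [Ring R] [AddCommGroup M]
    [Module R M] [Module K M] [UniformSpace M] : Prop :=
  CompleteSpace M ∧ T2Space M ∧
    ∀ U ∈ nhds (0 : M), ∃ N : Submodule R M, ∃ W : Submodule K M,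
      (W : Set M) = (N : Set M) ∧ (W : Set M) ⊆ U ∧ IsOpen (W : Set M) ∧
        FiniteDimensional K (M ⧸ W)

open Set Function

theorem closure_image_eq_image_closure_of_idempotent {X : Type*} [TopologicalSpace X]
    [T2Space X] {f : X → X} (hf : Continuous f) (hff : ∀ x, f (f x) = f x) {S : Set X}
    (hS : MapsTo f S S) : closure (f '' S) = f '' closure S := by
  refine Subset.antisymm (fun x hx => ⟨x, ?_, ?_⟩) (image_closure_subset_closure_image hf)
  · exact closure_mono hS.image_subset hx
  · have hfix : f '' S ⊆ fixedPoints f := by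
      rintro _ ⟨y, -, rfl⟩
      exact hff y
    exact closure_minimal hfix (isClosed_fixedPoints hf) hx

theorem closure_smul_idempotent_general
    (K B : Type*) [Field K] [Ring B] [UniformSpace B]
    (M : Type*) [AddCommGroup M] [Module Bᵐᵒᵖ M] [Module K M] [UniformSpace M]
    [ContinuousSMul Bᵐᵒᵖ M]
    (hM : IsPseudocompactModule K Bᵐᵒᵖ M)
    (e : B) (he : IsIdempotentElem e)
    (V : Submodule K M) (hVe : ∀ v ∈ V, (MulOpposite.op e) • v ∈ V) :
    closure ((fun m : M => (MulOpposite.op e) • m) '' (V : Set M)) =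
      (fun m : M => (MulOpposite.op e) • m) '' closure (V : Set M) := by
  have : T2Space M := hM.2.1
  have hidem : ∀ m : M, op e • op e • m = op e • m := fun m => by
    rw [smul_smul, ← op_mul, he.eq]
  exact closure_image_eq_image_closure_of_idempotent (continuous_const_smul _) hidem hVe

/-- for a right pseudocompact `B`-module `M`, a `K`-subspace `V` with
`V·e ⊆ V` for an idempotent `e` of `B`, the closure of `V·e` equals `(closure V)·e`. -/
theorem closure_smul_idempotent
    (K B : Type*) [Field K] [Ring B] [Algebra K B] [UniformSpace B]
    [IsTopologicalRing B] (hB : IsPseudocompactAlgebra K B)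
    (M : Type*) [AddCommGroup M] [Module Bᵐᵒᵖ M] [Module K M] [UniformSpace M]
    [IsTopologicalAddGroup M] [ContinuousSMul Bᵐᵒᵖ M]
    (hM : IsPseudocompactModule K Bᵐᵒᵖ M)
    (e : B) (he : IsIdempotentElem e)
    (V : Submodule K M) (hVe : ∀ v ∈ V, (MulOpposite.op e) • v ∈ V) :
    closure ((fun m : M => (MulOpposite.op e) • m) '' (V : Set M)) =
      (fun m : M => (MulOpposite.op e) • m) '' closure (V : Set M) :=
  closure_smul_idempotent_general K B M hM e he V hVe
end

section
/- A partially ordered set (Λ, ≤) is interval-finite (every closed interval [μ,λ] is finite) and good if and only if every finitely generated lower set (ideal) Γ ⊆ Λ admits a descending chain of finitely generated subideals Γ = Γ_0 ⊇ Γ_1 ⊇ Γ_2 ⊇ … such that Γ_k \ Γ_{k+1} is finite for every k ≥ 0 and the intersection of all Γ_k is empty. -/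
/-- A poset is interval-finite if every closed interval is finite. -/
def IntervalFinite (Λ : Type*) [PartialOrder Λ] : Prop :=
  ∀ a b : Λ, (Set.Icc a b).Finite

/-- A poset is good if every non-minimal element has at least one but only finitely
many predecessors (covers from below), and whenever `μ < λ` there is a predecessor `λ'`
of `λ` with `μ ≤ λ'`. -/
def GoodPoset (Λ : Type*) [PartialOrder Λ] : Prop :=
  (∀ l : Λ, ¬ IsMin l → (∃ m, m ⋖ l) ∧ {m : Λ | m ⋖ l}.Finite) ∧
  (∀ m l : Λ, m < l → ∃ l' : Λ, l' ⋖ l ∧ m ≤ l')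

/-- A finitely generated ideal of a poset: a finite union of principal ideals. -/
def IsFGIdeal {Λ : Type*} [PartialOrder Λ] (Γ : Set Λ) : Prop :=
  ∃ s : Finset Λ, Γ = ⋃ l ∈ s, Set.Iic l

/-!
An interval-finite poset is strongly coatomic, so the second condition of goodness is automatic
and goodness reduces to finiteness of the sets of predecessors.

If `Γ` is generated by `s`, take `Γₖ` to be generated by the set `sₖ` of `k`-fold predecessors of `s`.
Strong coatomicity gives `Γₖ \ Γₖ₊₁ ⊆ sₖ`, and every `x ∈ Γₖ` lies below some `l ∈ s`
with `[x, l]` of cardinality greater than `k`, so no element lies in every `Γₖ`.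

Conversely, a chain for `Γ = (λ]` reaches some `Γₖ` not containing `μ` (resp. `λ`) with
`(λ] \ Γₖ` finite: this bounds `[μ, λ]`, and every predecessor of `λ` lies either in
`(λ] \ Γₖ` or, being below a generator `g < λ` of `Γₖ`, equals `g`.
-/

open Set

section

variable {Λ : Type*} [PartialOrder Λ]

structure IsExhaustingFGChain (Γ : Set Λ) (G : ℕ → Set Λ) : Prop where
  zero : G 0 = Γ
  isFGIdeal : ∀ k, IsFGIdeal (G k)
  succ_subset : ∀ k, G (k + 1) ⊆ G k
  finite_diff_succ : ∀ k, (G k \ G (k + 1)).Finite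
  iInter_eq_empty : ⋂ k, G k = ∅

lemma IsFGIdeal.isLowerSet {Γ : Set Λ} (hΓ : IsFGIdeal Γ) : IsLowerSet Γ := by
  obtain ⟨s, rfl⟩ := hΓ
  exact isLowerSet_iUnion₂ fun l _ => isLowerSet_Iic l

lemma GoodPoset.finite_covBy (h : GoodPoset Λ) (l : Λ) : {m | m ⋖ l}.Finite := by
  by_cases hl : IsMin l
  · convert finite_empty
    exact eq_empty_of_forall_notMem fun m hm => hl.not_lt hm.lt
  · exact (h.1 l hl).2

lemma IntervalFinite.isStronglyCoatomic (h : IntervalFinite Λ) : IsStronglyCoatomic Λ :=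
  letI := LocallyFiniteOrder.ofFiniteIcc h
  inferInstance

lemma goodPoset_iff_of_intervalFinite (h : IntervalFinite Λ) :
    GoodPoset Λ ↔ ∀ l : Λ, {m | m ⋖ l}.Finite := by
  have := h.isStronglyCoatomic
  refine ⟨GoodPoset.finite_covBy, fun hfin => ⟨fun l hl => ⟨?_, hfin l⟩, ?_⟩⟩
  · obtain ⟨m, hml⟩ := not_isMin_iff.1 hl
    obtain ⟨l', -, hl'⟩ := exists_le_covBy_of_lt hml
    exact ⟨l', hl'⟩
  · intro m l hml
    obtain ⟨l', hml', hl'⟩ := exists_le_covBy_of_lt hml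
    exact ⟨l', hl', hml'⟩

section LowerCovers

def lowerCovers (s : Set Λ) : Set Λ := {m | ∃ l ∈ s, m ⋖ l}

lemma lowerCovers_finite (hfin : ∀ l : Λ, {m | m ⋖ l}.Finite) {s : Set Λ} (hs : s.Finite) :
    (lowerCovers s).Finite := by
  convert hs.biUnion fun l _ => hfin l using 1
  ext m
  simp [lowerCovers]

lemma biUnion_Iic_lowerCovers_subset (s : Set Λ) :
    ⋃ l ∈ lowerCovers s, Iic l ⊆ ⋃ l ∈ s, Iic l := by
  simp only [iUnion₂_subset_iff]
  rintro m ⟨l, hl, hml⟩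
  exact (Iic_subset_Iic.2 hml.le).trans (subset_biUnion_of_mem hl)

lemma biUnion_Iic_diff_lowerCovers_subset [IsStronglyCoatomic Λ] (s : Set Λ) :
    (⋃ l ∈ s, Iic l) \ ⋃ l ∈ lowerCovers s, Iic l ⊆ s := by
  rintro x ⟨hx, hx'⟩
  obtain ⟨l, hl, hxl⟩ := mem_iUnion₂.1 hx
  rcases (mem_Iic.1 hxl).lt_or_eq with hlt | rfl
  · obtain ⟨l', hxl', hl'⟩ := exists_le_covBy_of_lt hlt
    exact absurd (mem_iUnion₂.2 ⟨l', ⟨l, hl, hl'⟩, hxl'⟩) hx'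
  · exact hl

lemma exists_lt_card_Icc_of_mem_iterate_lowerCovers [LocallyFiniteOrder Λ] {s : Set Λ} :
    ∀ {k : ℕ} {m : Λ}, m ∈ lowerCovers^[k] s → ∃ l ∈ s, m ≤ l ∧ k < (Finset.Icc m l).card
  | 0, m, hm => ⟨m, hm, le_rfl, by simp⟩
  | k + 1, m, hm => by
    rw [Function.iterate_succ_apply'] at hm
    obtain ⟨l', hl', hml'⟩ := hm
    obtain ⟨l, hl, hl'l, hk⟩ := exists_lt_card_Icc_of_mem_iterate_lowerCovers hl'
    refine ⟨l, hl, hml'.le.trans hl'l, (Nat.succ_lt_succ hk).trans_le ?_⟩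
    exact Finset.card_lt_card (Finset.Icc_ssubset_Icc_left (hml'.le.trans hl'l) hml'.lt le_rfl)

lemma iInter_biUnion_Iic_iterate_lowerCovers_eq_empty [LocallyFiniteOrder Λ] (s : Finset Λ) :
    ⋂ k, ⋃ l ∈ lowerCovers^[k] (s : Set Λ), Iic l = ∅ := by
  refine eq_empty_of_forall_notMem fun x hx => ?_
  set N := ∑ l ∈ s, (Finset.Icc x l).card
  obtain ⟨y, hy, hxy⟩ := mem_iUnion₂.1 (mem_iInter.1 hx N)
  obtain ⟨l, hl, hyl, hN⟩ := exists_lt_card_Icc_of_mem_iterate_lowerCovers hy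
  have : (Finset.Icc y l).card ≤ N :=
    calc (Finset.Icc y l).card ≤ (Finset.Icc x l).card :=
          Finset.card_le_card (Finset.Icc_subset_Icc_left hxy)
      _ ≤ N := Finset.single_le_sum (f := fun l => (Finset.Icc x l).card)
          (fun _ _ => Nat.zero_le _) (Finset.mem_coe.1 hl)
  omega

lemma exists_isExhaustingFGChain [LocallyFiniteOrder Λ] (hfin : ∀ l : Λ, {m | m ⋖ l}.Finite)
    (s : Finset Λ) : ∃ G, IsExhaustingFGChain (⋃ l ∈ s, Iic l) G := by
  have hfinite : ∀ k, (lowerCovers^[k] (s : Set Λ)).Finite := fun k => by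
    induction k with
    | zero => exact s.finite_toSet
    | succ k ih => rw [Function.iterate_succ_apply']; exact lowerCovers_finite hfin ih
  refine ⟨fun k => ⋃ l ∈ lowerCovers^[k] (s : Set Λ), Iic l, ⟨by simp, fun k => ?_, fun k => ?_,
    fun k => ?_, iInter_biUnion_Iic_iterate_lowerCovers_eq_empty s⟩⟩
  · exact ⟨(hfinite k).toFinset, by simp⟩
  · simp only [Function.iterate_succ_apply']
    exact biUnion_Iic_lowerCovers_subset _
  · simp only [Function.iterate_succ_apply']
    exact (hfinite k).subset (biUnion_Iic_diff_lowerCovers_subset _)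

end LowerCovers

namespace IsExhaustingFGChain

variable {Γ : Set Λ} {G : ℕ → Set Λ}

lemma subset (hG : IsExhaustingFGChain Γ G) (k : ℕ) : G k ⊆ Γ :=
  hG.zero ▸ antitone_nat_of_succ_le hG.succ_subset (Nat.zero_le k)

lemma finite_diff (hG : IsExhaustingFGChain Γ G) (k : ℕ) : (Γ \ G k).Finite := by
  induction k with
  | zero => simp [hG.zero]
  | succ k ih => exact (ih.union (hG.finite_diff_succ k)).subset (sdiff_triangle _ _ _)

lemma exists_notMem (hG : IsExhaustingFGChain Γ G) (a : Λ) : ∃ k, a ∉ G k := by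
  by_contra! h
  simpa [hG.iInter_eq_empty] using mem_iInter.2 h

lemma finite_Icc {b : Λ} (hG : IsExhaustingFGChain (Iic b) G) (a : Λ) : (Icc a b).Finite := by
  obtain ⟨k, hk⟩ := hG.exists_notMem a
  refine (hG.finite_diff k).subset fun x hx => ⟨hx.2, fun hxk => hk ?_⟩
  exact (hG.isFGIdeal k).isLowerSet hx.1 hxk

lemma finite_covBy {l : Λ} (hG : IsExhaustingFGChain (Iic l) G) : {m | m ⋖ l}.Finite := by
  obtain ⟨k, hk⟩ := hG.exists_notMem l
  obtain ⟨t, ht⟩ := hG.isFGIdeal k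
  refine ((hG.finite_diff k).union t.finite_toSet).subset fun m hm => ?_
  by_cases hmk : m ∈ G k
  · obtain ⟨g, hg, hmg⟩ := mem_iUnion₂.1 (ht ▸ hmk)
    have hgk : g ∈ G k := ht ▸ mem_iUnion₂.2 ⟨g, hg, le_rfl⟩
    have hgl : g < l := (hG.subset k hgk).lt_of_ne fun h => hk (h ▸ hgk)
    rcases (mem_Iic.1 hmg).lt_or_eq with hlt | rfl
    · exact absurd hgl (hm.2 hlt)
    · exact Or.inr hg
  · exact Or.inl ⟨hm.lt.le, hmk⟩

end IsExhaustingFGChain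

end

/-- a poset is interval-finite and good iff every finitely generated ideal
admits a descending chain of finitely generated subideals with finite successive
differences and empty intersection. -/
theorem intervalFinite_good_iff_chains (Λ : Type*) [PartialOrder Λ] :
    (IntervalFinite Λ ∧ GoodPoset Λ) ↔
      ∀ Γ : Set Λ, IsFGIdeal Γ →
        ∃ G : ℕ → Set Λ, G 0 = Γ ∧ (∀ k, IsFGIdeal (G k)) ∧
          (∀ k, G (k + 1) ⊆ G k) ∧ (∀ k, (G k \ G (k + 1)).Finite) ∧
          (⋂ k, G k) = ∅ := by
  constructor
  · rintro ⟨hIF, hgood⟩ Γ ⟨s, rfl⟩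
    let := LocallyFiniteOrder.ofFiniteIcc hIF
    obtain ⟨G, hG⟩ := exists_isExhaustingFGChain hgood.finite_covBy s
    exact ⟨G, hG.zero, hG.isFGIdeal, hG.succ_subset, hG.finite_diff_succ, hG.iInter_eq_empty⟩
  · intro h
    have hchain : ∀ l : Λ, ∃ G, IsExhaustingFGChain (Iic l) G := fun l => by
      obtain ⟨G, h0, hfg, hsucc, hdiff, hempty⟩ := h (Iic l) ⟨{l}, by simp⟩
      exact ⟨G, h0, hfg, hsucc, hdiff, hempty⟩
    have hIF : IntervalFinite Λ := fun a b =>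
      let ⟨_, hG⟩ := hchain b
      hG.finite_Icc a
    refine ⟨hIF, (goodPoset_iff_of_intervalFinite hIF).2 fun l => ?_⟩
    obtain ⟨_, hG⟩ := hchain l
    exact hG.finite_covBy
end

section
/- Let (Λ, ≤) be an interval-finite good poset and Γ = ⋃_{i=1}^t (λ_i] a finitely generated ideal with pairwise incomparable generators λ_i. For μ ∈ Γ define ht(μ) as the maximum over i with μ ≤ λ_i of the maximal length s of a chain μ = μ_0 < μ_1 < … < μ_s = λ_i in which each μ_j is a predecessor of μ_{j+1}. Then for every k ≥ 0 the set {μ ∈ Γ : ht(μ) = k} is finite, and {μ ∈ Γ : ht(μ) ≥ k} is the finitely generated ideal generated by {μ : ht(μ) = k}. -/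
/-- The set of lengths `s` of saturated chains `μ = μ₀ ⋖ μ₁ ⋖ … ⋖ μ_s = l i`
from `μ` to one of the generators `l i`. -/
def chainLengths {Λ : Type*} [PartialOrder Λ] {t : ℕ} (l : Fin t → Λ) (μ : Λ) : Set ℕ :=
  {s : ℕ | ∃ i : Fin t, ∃ f : ℕ → Λ, f 0 = μ ∧ f s = l i ∧ ∀ j < s, f j ⋖ f (j + 1)}

section Aux

variable {Λ : Type*} [PartialOrder Λ]

lemma chain_mono' {f : ℕ → Λ} {m : ℕ} (hf : ∀ j < m, f j ⋖ f (j + 1)) (a : ℕ) :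
    ∀ b, a ≤ b → b ≤ m → f a ≤ f b := by
  intro b
  induction b with
  | zero => intro h _; simp [Nat.le_zero.mp h]
  | succ n ih =>
    intro hab hbm
    rcases Nat.lt_or_ge a (n + 1) with h | h
    · exact le_trans (ih (by omega) (by omega)) (hf n (by omega)).le
    · have : a = n + 1 := by omega
      simp [this]

lemma exists_chain' (hIF : IntervalFinite Λ) (hGood : GoodPoset Λ) :
    ∀ (n : ℕ) (μ ν : Λ), (hIF μ ν).toFinset.card ≤ n → μ ≤ ν →
      ∃ (s : ℕ), ∃ (f : ℕ → Λ), f 0 = μ ∧ f s = ν ∧ ∀ j < s, f j ⋖ f (j + 1) := by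
  classical
  intro n
  induction n with
  | zero =>
    intro μ ν hcard hle
    exfalso
    have hmem : μ ∈ (hIF μ ν).toFinset := by simp [Set.mem_Icc, hle]
    have := Finset.card_pos.mpr ⟨μ, hmem⟩
    omega
  | succ n ih =>
    intro μ ν hcard hle
    rcases eq_or_lt_of_le hle with rfl | hlt
    · exact ⟨0, fun _ => μ, rfl, rfl, fun j hj => by omega⟩
    · obtain ⟨ν', hcov, hμν'⟩ := hGood.2 μ ν hlt
      have hsub : (hIF μ ν').toFinset ⊆ (hIF μ ν).toFinset.erase ν := by
        intro x hx
        simp only [Set.Finite.mem_toFinset, Set.mem_Icc] at hx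
        have hxν : x ≤ ν := le_trans hx.2 hcov.lt.le
        refine Finset.mem_erase.mpr ⟨?_, by simp [Set.mem_Icc, hx.1, hxν]⟩
        rintro rfl
        exact absurd hx.2 (not_le_of_gt hcov.lt)
      have hcard' : (hIF μ ν').toFinset.card ≤ n := by
        have h1 := Finset.card_le_card hsub
        have h2 : ((hIF μ ν).toFinset.erase ν).card < (hIF μ ν).toFinset.card := by
          apply Finset.card_erase_lt_of_mem
          simp [Set.mem_Icc, hle]
        omega
      obtain ⟨s, f, hf0, hfs, hf⟩ := ih μ ν' hcard' hμν'
      refine ⟨s + 1, fun j => if j ≤ s then f j else ν, by simp [hf0], by simp, ?_⟩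
      intro j hj
      by_cases h1 : j + 1 ≤ s
      · simpa [h1, Nat.le_of_succ_le h1] using hf j (by omega)
      · have hjs : j = s := by omega
        subst hjs
        simpa [hfs] using hcov

lemma chain_concat' {t : ℕ} {l : Fin t → Λ} {μ ν : Λ} {r : ℕ} {f : ℕ → Λ}
    (hf0 : f 0 = μ) (hfr : f r = ν) (hf : ∀ j < r, f j ⋖ f (j + 1))
    {s : ℕ} (hs : s ∈ chainLengths l ν) : r + s ∈ chainLengths l μ := by
  obtain ⟨i, g, hg0, hgs, hg⟩ := hs
  refine ⟨i, fun j => if j < r then f j else g (j - r), ?_, ?_, ?_⟩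
  · by_cases h : 0 < r
    · simp [h, hf0]
    · have hr : r = 0 := by omega
      subst hr
      show g 0 = μ
      rw [hg0, ← hfr, hf0]
  · have h : ¬ r + s < r := by omega
    simp [h, hgs]
  · intro j hj
    by_cases h1 : j + 1 < r
    · have h2 : j < r := by omega
      simpa [h1, h2] using hf j h2
    · by_cases h2 : j < r
      · have hjr : j + 1 = r := by omega
        have heq : g (j + 1 - r) = f (j + 1) := by
          rw [hjr]
          simp only [Nat.sub_self]
          rw [hg0, ← hfr]
        simp only [h1, h2, if_pos, if_neg, if_false]
        rw [heq]
        exact hf j h2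
      · have h4 : j + 1 - r = (j - r) + 1 := by omega
        simp only [h1, h2, if_neg, if_false]
        rw [h4]
        exact hg (j - r) (by omega)

lemma ht_shift' {t : ℕ} {l : Fin t → Λ} {μ : Λ} {m : ℕ}
    (hm : IsGreatest (chainLengths l μ) m)
    {i : Fin t} {f : ℕ → Λ} (hf0 : f 0 = μ) (hfm : f m = l i)
    (hf : ∀ j < m, f j ⋖ f (j + 1)) {j : ℕ} (hj : j ≤ m) :
    f j ≤ l i ∧ IsGreatest (chainLengths l (f j)) (m - j) := by
  have hle : f j ≤ l i := hfm ▸ chain_mono' hf j m hj le_rfl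
  refine ⟨hle, ⟨⟨i, fun p => f (j + p), rfl, by show f (j + (m - j)) = l i; rw [show j + (m - j) = m by omega, hfm], ?_⟩, ?_⟩⟩
  · intro p hp
    simpa [Nat.add_assoc] using hf (j + p) (by omega)
  · intro s hs
    have hmem : j + s ∈ chainLengths l μ :=
      chain_concat' hf0 rfl (fun p hp => hf p (by omega)) hs
    have := hm.2 hmem
    omega

end Aux

/-- for an interval-finite good poset and a finitely generated ideal
`Γ = ⋃ (l i]` with pairwise incomparable generators, the height function `ht` (the maximal
length of a saturated chain from `μ` up to a generator) has finite level sets, and the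
set `{μ ∈ Γ : ht μ ≥ k}` is the ideal generated by `{μ ∈ Γ : ht μ = k}`. -/
theorem height_level_sets (Λ : Type*) [PartialOrder Λ]
    (hIF : IntervalFinite Λ) (hGood : GoodPoset Λ)
    (t : ℕ) (l : Fin t → Λ)
    (hinc : ∀ i j : Fin t, i ≠ j → ¬ (l i ≤ l j) ∧ ¬ (l j ≤ l i))
    (Γ : Set Λ) (hΓ : Γ = ⋃ i, Set.Iic (l i))
    (ht : Λ → ℕ) (hht : ∀ μ ∈ Γ, IsGreatest (chainLengths l μ) (ht μ)) :
    ∀ k : ℕ,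
      {μ | μ ∈ Γ ∧ ht μ = k}.Finite ∧
      {μ | μ ∈ Γ ∧ k ≤ ht μ} = ⋃ ν ∈ {μ | μ ∈ Γ ∧ ht μ = k}, Set.Iic ν := by
  have hmemΓ : ∀ (x : Λ) (i : Fin t), x ≤ l i → x ∈ Γ := by
    intro x i hx
    rw [hΓ]
    exact Set.mem_iUnion.mpr ⟨i, hx⟩
  -- truncation: for any k ≤ ht μ there is ν ≥ μ with ht ν = k
  have trunc : ∀ μ ∈ Γ, ∀ k, k ≤ ht μ → ∃ ν, μ ≤ ν ∧ ν ∈ Γ ∧ ht ν = k := by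
    intro μ hμ k hk
    obtain ⟨i, f, hf0, hfm, hf⟩ := (hht μ hμ).1
    obtain ⟨hle, hG⟩ := ht_shift' (hht μ hμ) hf0 hfm hf (j := ht μ - k) (by omega)
    have hνΓ : f (ht μ - k) ∈ Γ := hmemΓ _ i hle
    refine ⟨f (ht μ - k), hf0 ▸ chain_mono' hf 0 (ht μ - k) (by omega) (by omega), hνΓ, ?_⟩
    have := (hht _ hνΓ).unique hG
    omega
  -- step: if ht μ = k + 1 there is a cover ν of μ with ht ν = k
  have step : ∀ μ ∈ Γ, ∀ k, ht μ = k + 1 → ∃ ν, μ ⋖ ν ∧ ν ∈ Γ ∧ ht ν = k := by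
    intro μ hμ k hk
    obtain ⟨i, f, hf0, hfm, hf⟩ := (hht μ hμ).1
    obtain ⟨hle, hG⟩ := ht_shift' (hht μ hμ) hf0 hfm hf (j := 1) (by omega)
    have hνΓ : f 1 ∈ Γ := hmemΓ _ i hle
    refine ⟨f 1, hf0 ▸ hf 0 (by omega), hνΓ, ?_⟩
    have := (hht _ hνΓ).unique hG
    omega
  intro k
  constructor
  · -- finiteness by induction on k
    induction k with
    | zero =>
      apply Set.Finite.subset (Set.finite_range l)
      rintro μ ⟨hμ, h0⟩
      have h1 : (0 : ℕ) ∈ chainLengths l μ := h0 ▸ (hht μ hμ).1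
      obtain ⟨i, f, hf0, hfs, -⟩ := h1
      exact ⟨i, by rw [← hfs, hf0]⟩
    | succ n ihn =>
      have hpred : ∀ ν : Λ, {m | m ⋖ ν}.Finite := by
        intro ν
        by_cases h : IsMin ν
        · have : {m | m ⋖ ν} = ∅ := by
            ext m
            simp only [Set.mem_setOf_eq, Set.mem_empty_iff_false, iff_false]
            intro hm
            exact h.not_lt hm.lt
          rw [this]; exact Set.finite_empty
        · exact (hGood.1 ν h).2
      apply Set.Finite.subset (Set.Finite.biUnion ihn (fun ν _ => hpred ν))
      rintro μ ⟨hμ, hk⟩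
      obtain ⟨ν, hcov, hνΓ, hhtν⟩ := step μ hμ n hk
      exact Set.mem_biUnion (⟨hνΓ, hhtν⟩ : ν ∈ {μ | μ ∈ Γ ∧ ht μ = n}) hcov
  · -- ideal equality
    ext μ
    simp only [Set.mem_setOf_eq, Set.mem_iUnion, Set.mem_Iic, exists_prop]
    constructor
    · rintro ⟨hμ, hk⟩
      obtain ⟨ν, hμν, hνΓ, hhtν⟩ := trunc μ hμ k hk
      exact ⟨ν, ⟨hνΓ, hhtν⟩, hμν⟩
    · rintro ⟨ν, ⟨hνΓ, hhtν⟩, hμν⟩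
      have hμΓ : μ ∈ Γ := by
        rw [hΓ] at hνΓ
        obtain ⟨i, hi⟩ := Set.mem_iUnion.mp hνΓ
        exact hmemΓ μ i (le_trans hμν hi)
      refine ⟨hμΓ, ?_⟩
      obtain ⟨s, f, hf0, hfs, hf⟩ :=
        exists_chain' hIF hGood ((hIF μ ν).toFinset.card) μ ν le_rfl hμν
      have hνΓ' : ν ∈ Γ := by
        rw [hΓ] at hνΓ ⊢; exact hνΓ
      have hmem : s + ht ν ∈ chainLengths l μ :=
        chain_concat' hf0 hfs hf (hht ν hνΓ').1
      have := (hht μ hμΓ).2 hmem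
      omega
end
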